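/- arXiv:1907.01375 — 6 statements merged into one kernel-verified Lean document; each statement's English description precedes it below -/
import Mathlib

section
/- Let (R, ⊵) be a finite partially ordered set, let w : R → ℕ be a weight function, and let b ∈ ℕ. Suppose S ⊆ R is closed (whenever p ∈ S and q ⊵ p, also q ∈ S) and Σ_{s∈S} w(s) ≤ b. If p ∈ R satisfies Σ_{q : q ⊵ p} w(q) > b (the sum over all predecessors of p, including p itself), then S contains no element q with p ⊵ q (no descendant of p, including p itself). -/
/-- in a finite poset `R` (where `q ≤ p` means `q ⊵ p`, i.e. `q`
precedes `p`) with weights `w : R → ℕ` and budget `b`, if `S` is closed with total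
weight at most `b`, and the total weight of the predecessors of `p` (including `p`)
exceeds `b`, then `S` contains no descendant of `p` (including `p` itself). -/
theorem statement_8 {R : Type*} [Fintype R] [PartialOrder R]
    [DecidableRel ((· ≤ ·) : R → R → Prop)]
    (w : R → ℕ) (b : ℕ) (S : Finset R)
    (hclosed : ∀ p ∈ S, ∀ q, q ≤ p → q ∈ S)
    (hbudget : ∑ s ∈ S, w s ≤ b)
    (p : R) (hp : b < ∑ q ∈ Finset.univ.filter (fun q => q ≤ p), w q) :
    ∀ q ∈ S, ¬ p ≤ q := by
  intro q hq hpq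
  have hsub : Finset.univ.filter (fun r => r ≤ p) ⊆ S := by
    intro r hr
    exact hclosed q hq r ((Finset.mem_filter.mp hr).2.trans hpq)
  exact absurd ((Finset.sum_le_sum_of_subset hsub).trans hbudget) (not_le.mpr hp)
end

section
/- Let P be a Stable Roommates preference profile with complete preference lists on a finite agent set U, let x, y, z ∈ U be three distinct agents, and let V ⊆ U \ {x, y, z} be nonempty. Suppose the preference lists satisfy: agent x strictly prefers every agent of V to y, strictly prefers y to z, and strictly prefers z to every agent of U \ (V ∪ {x, y, z}); agent y strictly prefers z to x and strictly prefers x to every other agent; agent z strictly prefers x to y and strictly prefers y to every other agent. Then every stable matching M for P satisfies: x is matched and M(x) ∈ V, and {y, z} ∈ M. -/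
/-- A matching on a set of agents: a set of non-diagonal unordered pairs
that are pairwise disjoint. -/
def IsMatching {α : Type*} (M : Set (Sym2 α)) : Prop :=
  (∀ e ∈ M, ¬ e.IsDiag) ∧ M.Pairwise fun e f => ∀ a, a ∈ e → a ∉ f

/-- The strict part of a weak preference relation `R`:
`a ≻_i b` iff `R i a b` and not `R i b a`. -/
def strictPref {U : Type*} (R : U → U → U → Prop) (i a b : U) : Prop :=
  R i a b ∧ ¬ R i b a

lemma strictPref_trans {U : Type*} {R : U → U → U → Prop} {i a b c : U}
    (ht : Transitive (R i)) (h1 : strictPref R i a b) (h2 : strictPref R i b c) :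
    strictPref R i a c :=
  ⟨ht h1.1 h2.1, fun h => h2.2 (ht h h1.1)⟩

lemma partner_unique {U : Type*} {M : Set (Sym2 U)} (hM : IsMatching M)
    {a b c : U} (h1 : s(a, b) ∈ M) (h2 : s(a, c) ∈ M) : b = c := by
  by_cases he : s(a, b) = s(a, c)
  · rcases Sym2.eq_iff.mp he with ⟨_, h⟩ | ⟨h1', h2'⟩
    · exact h
    · exact h2'.trans h1'
  · exact absurd (Sym2.mem_mk_left a c) (hM.2 h1 h2 he a (Sym2.mem_mk_left a b))

lemma not_diag_ne {U : Type*} {M : Set (Sym2 U)} (hM : IsMatching M)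
    {a b : U} (h : s(a, b) ∈ M) : b ≠ a := by
  intro hab
  exact hM.1 _ h (by simp [hab])

/-- in a Stable Roommates profile with complete preference lists,
if agent `x` ranks `V ≻ y ≻ z ≻ (everything else)`, agent `y` ranks
`z ≻ x ≻ (everything else)` and agent `z` ranks `x ≻ y ≻ (everything else)`,
then in every stable matching `M`, agent `x` is matched to some agent of `V`
and `{y,z} ∈ M`. -/
theorem statement_10 {U : Type*} [Fintype U]
    (R : U → U → U → Prop)
    (htrans : ∀ i, Transitive (R i))
    (htotal : ∀ i a b, a ≠ i → b ≠ i → R i a b ∨ R i b a)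
    (x y z : U) (hxy : x ≠ y) (hxz : x ≠ z) (hyz : y ≠ z)
    (V : Set U) (hVne : V.Nonempty)
    (hVsub : ∀ v ∈ V, v ≠ x ∧ v ≠ y ∧ v ≠ z)
    -- the preference list of agent x: V ≻ y ≻ z ≻ everything else
    (hx1 : ∀ v ∈ V, strictPref R x v y)
    (hx2 : strictPref R x y z)
    (hx3 : ∀ u, u ∉ V → u ≠ x → u ≠ y → u ≠ z → strictPref R x z u)
    -- the preference list of agent y: z ≻ x ≻ everything else
    (hy1 : strictPref R y z x)
    (hy2 : ∀ u, u ≠ y → u ≠ z → u ≠ x → strictPref R y x u)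
    -- the preference list of agent z: x ≻ y ≻ everything else
    (hz1 : strictPref R z x y)
    (hz2 : ∀ u, u ≠ z → u ≠ x → u ≠ y → strictPref R z y u)
    -- M is a stable matching: a matching with no blocking pair
    (M : Set (Sym2 U)) (hM : IsMatching M)
    (hstable : ∀ a b : U, a ≠ b → s(a, b) ∉ M →
      ¬ ((∀ p, s(a, p) ∈ M → strictPref R a b p) ∧
         (∀ p, s(b, p) ∈ M → strictPref R b a p))) :
    (∃ v ∈ V, s(x, v) ∈ M) ∧ s(y, z) ∈ M := by
  -- Step 1: s(y,z) ∈ M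
  have hyzM : s(y, z) ∈ M := by
    by_contra hnot
    -- either y's partner beats the pair, or z's
    have hblock := hstable y z hyz hnot
    -- first, if z is not matched to x, (y,z) blocks
    by_cases hzx : s(z, x) ∈ M
    · -- then x is matched to z; (x,y) blocks
      have hxzM : s(x, z) ∈ M := by rwa [Sym2.eq_swap] at hzx
      have hxyM : s(x, y) ∉ M := by
        intro h
        exact hyz (partner_unique hM h hxzM)
      apply hstable x y hxy hxyM
      constructor
      · intro p hp
        have : p = z := partner_unique hM hp hxzM
        rw [this]; exact hx2
      · intro p hp
        have hpy : p ≠ y := not_diag_ne hM hp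
        have hpz : p ≠ z := by
          intro h; rw [h] at hp; exact hnot hp
        have hpx : p ≠ x := by
          intro h; rw [h, Sym2.eq_swap] at hp; exact hxyM hp
        exact hy2 p hpy hpz hpx
    · apply hblock
      constructor
      · intro p hp
        have hpy : p ≠ y := not_diag_ne hM hp
        have hpz : p ≠ z := by
          intro h; rw [h] at hp; exact hnot hp
        by_cases hpx : p = x
        · rw [hpx]; exact hy1
        · exact strictPref_trans (htrans y) hy1 (hy2 p hpy hpz hpx)
      · intro p hp
        have hpz : p ≠ z := not_diag_ne hM hp
        have hpy : p ≠ y := by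
          intro h; rw [h, Sym2.eq_swap] at hp; exact hnot hp
        have hpx : p ≠ x := by
          intro h; rw [h] at hp; exact hzx hp
        exact hz2 p hpz hpx hpy
  -- Step 2: x is matched to some v ∈ V
  have hxyM : s(x, y) ∉ M := by
    intro h
    rw [Sym2.eq_swap] at h
    exact hxz (partner_unique hM h hyzM)
  have hxzM : s(x, z) ∉ M := by
    intro h
    have hzyM : s(z, y) ∈ M := by rwa [Sym2.eq_swap] at hyzM
    rw [Sym2.eq_swap] at h
    exact hxy (partner_unique hM h hzyM)
  refine ⟨?_, hyzM⟩
  by_contra hnot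
  push_neg at hnot
  apply hstable x z hxz hxzM
  constructor
  · intro p hp
    have hpV : p ∉ V := fun h => hnot p h hp
    have hpx : p ≠ x := not_diag_ne hM hp
    have hpy : p ≠ y := by
      intro h; rw [h] at hp; exact hxyM hp
    have hpz : p ≠ z := by
      intro h; rw [h] at hp; exact hxzM hp
    exact hx3 p hpV hpx hpy hpz
  · intro p hp
    have hzyM : s(z, y) ∈ M := by rwa [Sym2.eq_swap] at hyzM
    have : p = y := partner_unique hM hp hzyM
    rw [this]; exact hz1
end

section
/- Let G = (V, E) be a finite graph and h ≥ 2 an integer. Let G' be the graph obtained from G by adding a set S* of h new vertices, adding all edges between V and S*, and adding one edge e* between two distinct vertices of S*. Then: (a) every independent set of G' is a subset of V or a subset of S*; and (b) G' has an independent set of size h if and only if G has an independent set of size h. -/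
/-- A set of vertices is independent in a graph if no two of its elements are adjacent. -/
def SimpleGraph.IsIndepSet' {V : Type*} (G : SimpleGraph V) (S : Set V) : Prop :=
  S.Pairwise fun a b => ¬ G.Adj a b

/-- The graph `G'` obtained from `G` by adding a set `S* = Fin h` of new vertices,
all edges between `V` and `S*`, and one edge `e* = {s₀, s₁}` between two distinct new
vertices. -/
def augGraph {V : Type*} (G : SimpleGraph V) (h : ℕ) (s₀ s₁ : Fin h) :
    SimpleGraph (V ⊕ Fin h) :=
  SimpleGraph.fromRel (fun u v =>
    match u, v with
    | Sum.inl a, Sum.inl b => G.Adj a b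
    | Sum.inl _, Sum.inr _ => True
    | Sum.inr s, Sum.inr t => s = s₀ ∧ t = s₁
    | Sum.inr _, Sum.inl _ => False)

/-- (a) every independent set of `G'` is a subset of `V` or a subset
of `S*`; (b) `G'` has an independent set of size `h` iff `G` has one. -/
theorem statement_11 {V : Type*} [Fintype V] (G : SimpleGraph V)
    (h : ℕ) (hh : 2 ≤ h) (s₀ s₁ : Fin h) (hs : s₀ ≠ s₁) :
    (∀ S : Set (V ⊕ Fin h), (augGraph G h s₀ s₁).IsIndepSet' S →
      (∀ v ∈ S, ∃ a : V, v = Sum.inl a) ∨ (∀ v ∈ S, ∃ s : Fin h, v = Sum.inr s)) ∧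
    ((∃ S : Set (V ⊕ Fin h), (augGraph G h s₀ s₁).IsIndepSet' S ∧ S.ncard = h) ↔
      (∃ S : Set V, G.IsIndepSet' S ∧ S.ncard = h)) := by
  have parta : ∀ S : Set (V ⊕ Fin h), (augGraph G h s₀ s₁).IsIndepSet' S →
      (∀ v ∈ S, ∃ a : V, v = Sum.inl a) ∨ (∀ v ∈ S, ∃ s : Fin h, v = Sum.inr s) := by
    intro S hS
    by_contra hc
    push_neg at hc
    obtain ⟨⟨x, hxS, hx⟩, ⟨y, hyS, hy⟩⟩ := hc
    obtain ⟨s, rfl⟩ : ∃ s, x = Sum.inr s := by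
      cases x with
      | inl a => exact absurd rfl (hx a)
      | inr s => exact ⟨s, rfl⟩
    obtain ⟨a, rfl⟩ : ∃ a, y = Sum.inl a := by
      cases y with
      | inl a => exact ⟨a, rfl⟩
      | inr s => exact absurd rfl (hy s)
    exact hS hyS hxS (by simp) (by simp [augGraph])
  refine ⟨parta, ?_, ?_⟩
  · rintro ⟨S, hS, hcard⟩
    rcases parta S hS with hcase | hcase
    · refine ⟨Sum.inl ⁻¹' S, ?_, ?_⟩
      · intro a ha b hb hab hadj
        exact hS ha hb (by simpa using hab)
          (by simp [augGraph, hab, hadj])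
      · have hSeq : S = Sum.inl '' (Sum.inl ⁻¹' S) := by
          ext v
          constructor
          · intro hv; obtain ⟨a, rfl⟩ := hcase v hv; exact ⟨a, hv, rfl⟩
          · rintro ⟨a, ha, rfl⟩; exact ha
        rw [hSeq, Set.ncard_image_of_injective _ Sum.inl_injective] at hcard
        exact hcard
    · exfalso
      have hSeq : S = Sum.inr '' (Sum.inr ⁻¹' S) := by
        ext v
        constructor
        · intro hv; obtain ⟨s, rfl⟩ := hcase v hv; exact ⟨s, hv, rfl⟩
        · rintro ⟨s, hsv, rfl⟩; exact hsv
      rw [hSeq, Set.ncard_image_of_injective _ Sum.inr_injective] at hcard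
      have huniv : Sum.inr ⁻¹' S = (Set.univ : Set (Fin h)) := by
        apply Set.eq_of_subset_of_ncard_le (Set.subset_univ _)
        simp [Set.ncard_univ, hcard]
      have h0 : Sum.inr s₀ ∈ S := by rw [hSeq]; exact ⟨s₀, by simp [huniv], rfl⟩
      have h1 : Sum.inr s₁ ∈ S := by rw [hSeq]; exact ⟨s₁, by simp [huniv], rfl⟩
      exact hS h0 h1 (by simpa using hs) (by simp [augGraph, hs])
  · rintro ⟨S, hS, hcard⟩
    refine ⟨Sum.inl '' S, ?_, ?_⟩
    · rintro _ ⟨a, ha, rfl⟩ _ ⟨b, hb, rfl⟩ hne hadj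
      have hab : a ≠ b := fun e => hne (by rw [e])
      have : G.Adj a b := by
        simp only [augGraph, SimpleGraph.fromRel_adj] at hadj
        rcases hadj.2 with hadj | hadj
        · exact hadj
        · exact hadj.symm
      exact hS ha hb hab this
    · rwa [Set.ncard_image_of_injective _ Sum.inl_injective]
end

section
/- Let G be a finite graph and h > 2 an integer. Let G'' be the graph obtained from the complement of G by adding, for each vertex v of G, a new vertex v' adjacent only to v. Then G has an independent set of size h if and only if G'' contains a set S of h vertices that forms a clique in G'' and such that every vertex of S has a neighbor in G'' outside S. -/
/-- The graph `G''` obtained from the complement of `G` by adding, for each vertex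
`v` of `G`, a new pendant vertex `Sum.inr v` adjacent only to `Sum.inl v`. -/
def pendGraph {V : Type*} (G : SimpleGraph V) : SimpleGraph (V ⊕ V) :=
  SimpleGraph.fromRel (fun u v =>
    match u, v with
    | Sum.inl a, Sum.inl b => a ≠ b ∧ ¬ G.Adj a b
    | Sum.inl a, Sum.inr b => a = b
    | _, _ => False)

namespace SimpleGraph

variable {V : Type*}

theorem isIndepSet'_iff_isClique_compl (G : SimpleGraph V) (S : Set V) :
    G.IsIndepSet' S ↔ Gᶜ.IsClique S :=
  forall₄_congr fun a _ b _ => imp_congr_right fun hab => (and_iff_right hab).symm.trans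
    (G.compl_adj a b).symm

theorem IsClique.subset_pair {G : SimpleGraph V} {S : Set V} (hS : G.IsClique S) {v u : V}
    (hv : v ∈ S) (hu : ∀ w, G.Adj w v → w = u) : S ⊆ {v, u} := by
  intro w hw
  by_cases hwv : w = v
  · exact Or.inl hwv
  · exact Or.inr (hu w (hS hw hv hwv))

theorem IsClique.ncard_le_two {G : SimpleGraph V} {S : Set V} (hS : G.IsClique S) {v u : V}
    (hv : v ∈ S) (hu : ∀ w, G.Adj w v → w = u) : S.ncard ≤ 2 :=
  calc S.ncard ≤ ({v, u} : Set V).ncard := Set.ncard_le_ncard (hS.subset_pair hv hu)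
    _ ≤ ({u} : Set V).ncard + 1 := Set.ncard_insert_le v {u}
    _ = 2 := by rw [Set.ncard_singleton]

end SimpleGraph

namespace pendGraph

variable {V : Type*} (G : SimpleGraph V)

theorem adj_inl_inl (a b : V) : (pendGraph G).Adj (Sum.inl a) (Sum.inl b) ↔ Gᶜ.Adj a b := by
  simp only [pendGraph, SimpleGraph.fromRel_adj, SimpleGraph.compl_adj, ne_eq,
    Sum.inl.injEq, G.adj_comm b a]
  constructor
  · rintro ⟨hne, h | h⟩
    · exact h
    · exact ⟨Ne.symm h.1, h.2⟩
  · rintro ⟨hne, h⟩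
    exact ⟨hne, Or.inl ⟨hne, h⟩⟩

theorem adj_inl_inr (a : V) : (pendGraph G).Adj (Sum.inl a) (Sum.inr a) := by
  simp [pendGraph]

theorem eq_inl_of_adj_inr {w : V ⊕ V} {b : V} (hw : (pendGraph G).Adj w (Sum.inr b)) :
    w = Sum.inl b := by
  rcases w with a | a <;> simp_all [pendGraph]

theorem isClique_image_inl_iff (T : Set V) :
    (pendGraph G).IsClique (Sum.inl '' T) ↔ Gᶜ.IsClique T := by
  unfold SimpleGraph.IsClique
  rw [Sum.inl_injective.injOn.pairwise_image]
  exact forall₅_congr fun a _ b _ _ => adj_inl_inl G a b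

theorem subset_range_inl_of_isClique {S : Set (V ⊕ V)} (hS : (pendGraph G).IsClique S)
    (hcard : 2 < S.ncard) : S ⊆ Set.range Sum.inl := by
  rintro (a | b) hw
  · exact ⟨a, rfl⟩
  · exact absurd (hS.ncard_le_two hw fun _ => eq_inl_of_adj_inr G) (not_le.mpr hcard)

end pendGraph

theorem statement_12_general {V : Type*} (G : SimpleGraph V)
    (h : ℕ) (hh : 2 < h) :
    (∃ S : Set V, G.IsIndepSet' S ∧ S.ncard = h) ↔
    (∃ S : Set (V ⊕ V), S.ncard = h ∧ (pendGraph G).IsClique S ∧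
      ∀ v ∈ S, ∃ u ∉ S, (pendGraph G).Adj v u) := by
  simp only [SimpleGraph.isIndepSet'_iff_isClique_compl]
  constructor
  · rintro ⟨T, hT, rfl⟩
    refine ⟨Sum.inl '' T, Set.ncard_image_of_injective T Sum.inl_injective,
      (pendGraph.isClique_image_inl_iff G T).mpr hT, ?_⟩
    rintro _ ⟨a, -, rfl⟩
    exact ⟨Sum.inr a, by simp, pendGraph.adj_inl_inr G a⟩
  · rintro ⟨S, rfl, hS, -⟩
    have hS_eq := Set.image_preimage_eq_of_subset (pendGraph.subset_range_inl_of_isClique G hS hh)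
    refine ⟨Sum.inl ⁻¹' S, ?_, ?_⟩
    · rw [← pendGraph.isClique_image_inl_iff, hS_eq]
      exact hS
    · rw [← Set.ncard_image_of_injective _ Sum.inl_injective, hS_eq]

/-- `G` has an independent set of size `h` iff `G''` contains a set
`S` of `h` vertices forming a clique such that every vertex of `S` has a neighbor
outside `S`. -/
theorem statement_12 {V : Type*} [Fintype V] (G : SimpleGraph V)
    (h : ℕ) (hh : 2 < h) :
    (∃ S : Set V, G.IsIndepSet' S ∧ S.ncard = h) ↔
    (∃ S : Set (V ⊕ V), S.ncard = h ∧ (pendGraph G).IsClique S ∧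
      ∀ v ∈ S, ∃ u ∉ S, (pendGraph G).Adj v u) :=
  statement_12_general G h hh
end

section
/- Let G be a finite graph with vertex set {v₁, …, v_n} and consider the Feder construction with agents p_i, p̄_i, q_i, q̄_i for each i. Then the matching M₁ = {{p_i, q̄_i} : 1 ≤ i ≤ n} ∪ {{q_i, p̄_i} : 1 ≤ i ≤ n} is a stable matching for the profile P₁. -/
/-- The agents of the Feder construction: for each vertex `v` there are four
agents `p v`, `pbar v`, `q v`, `qbar v`. -/
inductive FAgent (V : Type*) where
  | p (v : V)
  | pbar (v : V)
  | q (v : V)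
  | qbar (v : V)

namespace FAgent

variable {V : Type*}

/-- Mutual acceptability in the Feder construction (the same in both profiles
`P₁` and `P₂`): `p i` accepts `pbar i`, `qbar i` and the agents `p j` for
neighbors `v_j` of `v_i`; `pbar i` accepts `q i` and `p i`; `q i` accepts
`qbar i` and `pbar i`; `qbar i` accepts `p i` and `q i`. -/
def acc (G : SimpleGraph V) : FAgent V → FAgent V → Prop
  | .p i, x => x = .pbar i ∨ x = .qbar i ∨ ∃ j, G.Adj i j ∧ x = .p j
  | .pbar i, x => x = .q i ∨ x = .p i
  | .q i, x => x = .qbar i ∨ x = .pbar i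
  | .qbar i, x => x = .p i ∨ x = .q i

/-- The strict preferences of profile `P₁`:
`p i : pbar i ≻ qbar i ≻ [p j for neighbors v_j, in the fixed order given by `<`]`;
`pbar i : q i ≻ p i`; `q i : qbar i ≻ pbar i`; `qbar i : p i ≻ q i`. -/
def pref1 (G : SimpleGraph V) [LT V] : FAgent V → FAgent V → FAgent V → Prop
  | .p i, .pbar i', .qbar i'' => i' = i ∧ i'' = i
  | .p i, .pbar i', .p j => i' = i ∧ G.Adj i j
  | .p i, .qbar i', .p j => i' = i ∧ G.Adj i j
  | .p i, .p j, .p k => G.Adj i j ∧ G.Adj i k ∧ j < k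
  | .pbar i, x, y => x = .q i ∧ y = .p i
  | .q i, x, y => x = .qbar i ∧ y = .pbar i
  | .qbar i, x, y => x = .p i ∧ y = .q i
  | _, _, _ => False

/-- The strict preferences of profile `P₂`:
`p i : pbar i ≻ [p j for neighbors v_j, in the fixed order given by `<`] ≻ qbar i`;
`pbar i : q i ≻ p i`; `q i : qbar i ≻ pbar i`; `qbar i : p i ≻ q i`. -/
def pref2 (G : SimpleGraph V) [LT V] : FAgent V → FAgent V → FAgent V → Prop
  | .p i, .pbar i', .p j => i' = i ∧ G.Adj i j
  | .p i, .pbar i', .qbar i'' => i' = i ∧ i'' = i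
  | .p i, .p j, .qbar i' => G.Adj i j ∧ i' = i
  | .p i, .p j, .p k => G.Adj i j ∧ G.Adj i k ∧ j < k
  | .pbar i, x, y => x = .q i ∧ y = .p i
  | .q i, x, y => x = .qbar i ∧ y = .pbar i
  | .qbar i, x, y => x = .p i ∧ y = .q i
  | _, _, _ => False

end FAgent

/-- A stable matching with respect to an acceptability relation `acc` and a strict
preference relation `pref`: `M` is a matching of mutually acceptable agents admitting
no blocking pair.  A pair `{a,b}` of mutually acceptable agents blocks `M` if
`{a,b} ∉ M`, `a` is unmatched or prefers `b` to its partner, and `b` is unmatched or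
prefers `a` to its partner. -/
def IsStable {A : Type*} (acc : A → A → Prop) (pref : A → A → A → Prop)
    (M : Set (Sym2 A)) : Prop :=
  IsMatching M ∧ (∀ a b : A, s(a, b) ∈ M → acc a b ∧ acc b a) ∧
  ∀ a b : A, a ≠ b → acc a b → acc b a → s(a, b) ∉ M →
    ¬ ((∀ c, s(a, c) ∈ M → pref a b c) ∧ (∀ c, s(b, c) ∈ M → pref b a c))

/-- the matching `M₁ = {{p i, qbar i} : i} ∪ {{q i, pbar i} : i}`
is a stable matching for the profile `P₁` of the Feder construction. -/
theorem statement_16 {V : Type*} [Fintype V] [LinearOrder V] (G : SimpleGraph V) :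
    IsStable (FAgent.acc G) (FAgent.pref1 G)
      ({e | ∃ i : V, e = s(FAgent.p i, FAgent.qbar i)} ∪
       {e | ∃ i : V, e = s(FAgent.q i, FAgent.pbar i)}) := by
  constructor
  · constructor
    · rintro e (⟨i, rfl⟩ | ⟨i, rfl⟩) <;> simp
    · rintro e (⟨i, rfl⟩ | ⟨i, rfl⟩) f (⟨j, rfl⟩ | ⟨j, rfl⟩) hne a ha hb <;>
        simp_all [Sym2.eq_iff] <;> aesop
  constructor
  · rintro a b (⟨i, h⟩ | ⟨i, h⟩) <;> rw [Sym2.eq_iff] at h <;>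
      rcases h with ⟨rfl, rfl⟩ | ⟨rfl, rfl⟩ <;> simp [FAgent.acc]
  · rintro a b hne hab hba hnm ⟨h1, h2⟩
    have mem1 : ∀ i : V, s(FAgent.p i, FAgent.qbar i) ∈
        ({e | ∃ i : V, e = s(FAgent.p i, FAgent.qbar i)} ∪
         {e | ∃ i : V, e = s(FAgent.q i, FAgent.pbar i)} : Set (Sym2 (FAgent V))) :=
      fun i => Or.inl ⟨i, rfl⟩
    have mem2 : ∀ i : V, s(FAgent.q i, FAgent.pbar i) ∈
        ({e | ∃ i : V, e = s(FAgent.p i, FAgent.qbar i)} ∪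
         {e | ∃ i : V, e = s(FAgent.q i, FAgent.pbar i)} : Set (Sym2 (FAgent V))) :=
      fun i => Or.inr ⟨i, rfl⟩
    have mem1' : ∀ i : V, s(FAgent.qbar i, FAgent.p i) ∈
        ({e | ∃ i : V, e = s(FAgent.p i, FAgent.qbar i)} ∪
         {e | ∃ i : V, e = s(FAgent.q i, FAgent.pbar i)} : Set (Sym2 (FAgent V))) :=
      fun i => Or.inl ⟨i, Sym2.eq_swap⟩
    have mem2' : ∀ i : V, s(FAgent.pbar i, FAgent.q i) ∈
        ({e | ∃ i : V, e = s(FAgent.p i, FAgent.qbar i)} ∪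
         {e | ∃ i : V, e = s(FAgent.q i, FAgent.pbar i)} : Set (Sym2 (FAgent V))) :=
      fun i => Or.inr ⟨i, Sym2.eq_swap⟩
    cases a with
    | p i =>
      have hp := h1 _ (mem1 i)
      cases b with
      | p j => exact hp
      | pbar j =>
        have := h2 _ (mem2' j)
        simp [FAgent.pref1] at this
      | q j => exact hp
      | qbar j => exact hp
    | pbar i =>
      have := h1 _ (mem2' i)
      simp [FAgent.pref1] at this
    | q i =>
      have hq := h1 _ (mem2 i)
      obtain ⟨rfl, -⟩ : b = FAgent.qbar i ∧ FAgent.pbar i = FAgent.pbar i := hq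
      have := h2 _ (mem1' i)
      simp [FAgent.pref1] at this
    | qbar i =>
      have := h1 _ (mem1' i)
      simp [FAgent.pref1] at this
end

section
/- Let G be a finite graph with vertex set {v₁, …, v_n} and consider the Feder construction. For every stable matching M for the profile P₂, the vertex set {v_i : M(p_i) = q̄_i} is an independent set in G. -/
/-- for every stable matching `M` for the profile `P₂` of the Feder
construction, the vertex set `{v_i : M(p i) = qbar i}` is independent in `G`. -/
theorem statement_17 {V : Type*} [Fintype V] [LinearOrder V] (G : SimpleGraph V)
    (M : Set (Sym2 (FAgent V)))
    (hM : IsStable (FAgent.acc G) (FAgent.pref2 G) M) :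
    {i : V | s(FAgent.p i, FAgent.qbar i) ∈ M}.Pairwise fun a b => ¬ G.Adj a b := by
  intro a ha b hb hab hadj
  obtain ⟨⟨hdiag, hpw⟩, hacc, hstab⟩ := hM
  simp only [Set.mem_setOf_eq] at ha hb
  have hkey : ∀ x c d : FAgent V, s(x, c) ∈ M → s(x, d) ∈ M → c = d := by
    intro x c d h1 h2
    by_cases he : (s(x, c) : Sym2 (FAgent V)) = s(x, d)
    · rw [Sym2.eq_iff] at he
      rcases he with ⟨_, h⟩ | ⟨h1', h2'⟩
      · exact h
      · exfalso
        apply hdiag _ h1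
        rw [h2']
        exact Sym2.mk_isDiag_iff.mpr rfl
    · exact absurd (Sym2.mem_mk_left x d) (hpw h1 h2 he x (Sym2.mem_mk_left x c))
  have hne : FAgent.p a ≠ FAgent.p b := fun h => hab (by injection h)
  have hnm : s(FAgent.p a, FAgent.p b) ∉ M := by
    intro h
    have := hkey _ _ _ h ha
    exact absurd this (by simp)
  refine hstab (FAgent.p a) (FAgent.p b) hne
    (Or.inr (Or.inr ⟨b, hadj, rfl⟩)) (Or.inr (Or.inr ⟨a, hadj.symm, rfl⟩)) hnm ⟨?_, ?_⟩
  · intro c hc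
    have := hkey _ _ _ hc ha
    subst this
    exact ⟨hadj, rfl⟩
  · intro c hc
    have := hkey _ _ _ hc hb
    subst this
    exact ⟨hadj.symm, rfl⟩
end
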